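/- Suppose η ≤ r_min/2, where r_min = min_i r_i. If at some time t the opinions satisfy max_{i,j} |x_i(t) - x_j(t)| ≤ 2η, then after one step of the noisy HK update x_i(t+1) = Π_{[0,1]}(x̃_i(t) + ξ_i(t)) with |ξ_i(t)| ≤ η, one again has max_{i,j} |x_i(t+1) - x_j(t+1)| ≤ 2η. Consequently, by induction, once the maximum opinion difference is at most 2η it stays at most 2η for all subsequent times. -/
import Mathlib


open Finset

/-- Projection of a real number onto the interval [0,1]. -/
noncomputable def proj01 (x : ℝ) : ℝ := if x > 1 then 1 else if x < 0 then 0 else x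

/-- Neighbor set of agent i. -/
noncomputable def nbr {n : ℕ} (x r : Fin n → ℝ) (i : Fin n) : Finset (Fin n) :=
  Finset.univ.filter (fun j => |x j - x i| ≤ r i)

/-- Neighbor average of agent i. -/
noncomputable def nbrAvg {n : ℕ} (x r : Fin n → ℝ) (i : Fin n) : ℝ :=
  (∑ j ∈ nbr x r i, x j) / ((nbr x r i).card : ℝ)

lemma proj01_lip (a b : ℝ) : |proj01 a - proj01 b| ≤ |a - b| := by
  unfold proj01
  split_ifs <;> rw [abs_le] <;> constructor <;> rw [abs_sub_comm] at * <;>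
    cases abs_le.mp (le_refl |a - b|) <;> nlinarith [abs_nonneg (a - b), le_abs_self (a-b), neg_abs_le (a-b), le_abs_self (b-a), neg_abs_le (b-a)]

/-- If η ≤ r_min/2, then once the maximum opinion difference of the noisy HK
dynamics is at most 2η, it remains at most 2η for all subsequent times. -/
theorem diff_le_two_eta_invariant (n : ℕ) (η : ℝ) (r : Fin n → ℝ)
    (hr : ∀ i, r i ∈ Set.Ioc (0:ℝ) 1) (hη : ∀ i, η ≤ r i / 2)
    (X : ℕ → Fin n → ℝ) (ξ : ℕ → Fin n → ℝ)
    (hX : ∀ t i, X t i ∈ Set.Icc (0:ℝ) 1)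
    (hξ : ∀ t i, |ξ t i| ≤ η)
    (hupd : ∀ t i, X (t + 1) i = proj01 (nbrAvg (X t) r i + ξ t i)) :
    ∀ t : ℕ, (∀ i j, |X t i - X t j| ≤ 2 * η) →
      ∀ s : ℕ, t ≤ s → ∀ i j, |X s i - X s j| ≤ 2 * η := by
  intro t ht s hts
  induction s with
  | zero =>
      have : t = 0 := Nat.le_zero.mp hts
      subst this; exact ht
  | succ s ih =>
      rcases Nat.lt_or_ge t (s + 1) with h | h
      · have hs : t ≤ s := Nat.lt_succ_iff.mp h
        have hcur : ∀ i j, |X s i - X s j| ≤ 2 * η := ih hs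
        -- all neighbor sets are univ
        have hnbr : ∀ i : Fin n, nbr (X s) r i = Finset.univ := by
          intro i
          apply Finset.eq_univ_iff_forall.mpr
          intro j
          simp only [nbr, Finset.mem_filter, Finset.mem_univ, true_and]
          have := hcur j i
          have := hη i
          linarith
        have havg : ∀ i : Fin n, nbrAvg (X s) r i = (∑ j, X s j) / (n : ℝ) := by
          intro i
          simp [nbrAvg, hnbr i]
        intro i j
        rw [hupd s i, hupd s j, havg i, havg j]
        calc |proj01 ((∑ k, X s k) / (n:ℝ) + ξ s i) - proj01 ((∑ k, X s k) / (n:ℝ) + ξ s j)|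
            ≤ |((∑ k, X s k) / (n:ℝ) + ξ s i) - ((∑ k, X s k) / (n:ℝ) + ξ s j)| := proj01_lip _ _
          _ = |ξ s i - ξ s j| := by ring_nf
          _ ≤ |ξ s i| + |ξ s j| := abs_sub _ _
          _ ≤ 2 * η := by have := hξ s i; have := hξ s j; linarith
      · have : t = s + 1 := le_antisymm hts h
        subst this; exact ht
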